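/- If a and b are atoms with Av(a) Wilf-equivalent to Av(b), then for all arch systems P and Q, Av(PaQ) is Wilf-equivalent to Av(PbQ). -/

import Mathlib

/-- Plane forests, modelling non-crossing arch systems: `node c r` is an atom
(an arch over the contents `c`) followed by the rest of the forest `r`. -/
inductive PF : Type
  | nil : PF
  | node : PF → PF → PF
  deriving DecidableEq

namespace PF

/-- number of arches (nodes) -/
def size : PF → ℕ
  | nil => 0
  | node c r => 1 + c.size + r.size

/-- concatenation of arch systems -/
def append : PF → PF → PF
  | nil, q => q
  | node c r, q => node c (r.append q)

instance : Append PF := ⟨PF.append⟩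

/-- an atom: a nonempty arch system with a single outermost arch -/
def IsAtom (a : PF) : Prop := ∃ c, a = node c nil

/-- an atom or the empty arch system -/
def AtomOrNil (a : PF) : Prop := a = nil ∨ IsAtom a

/-- One-step arch deletion: `Del X Y` means `Y` is obtained from `X` by deleting one arch
(the contents of a deleted arch are spliced in its place). -/
inductive Del : PF → PF → Prop
  | root (c r : PF) : Del (node c r) (c ++ r)
  | inside {c c' : PF} (r : PF) : Del c c' → Del (node c r) (node c' r)
  | rest {r r' : PF} (c : PF) : Del r r' → Del (node c r) (node c r')

/-- `Contains X A` : `A` is a substructure (subsystem) of `X`. -/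
def Contains (X A : PF) : Prop := Relation.ReflTransGen Del X A

/-- the class of arch systems avoiding `A` -/
def Av (A : PF) : Set PF := {X | ¬ Contains X A}

/-- Wilf-equivalence: same counting sequence by number of arches. -/
def WilfEq (A B : PF) : Prop :=
  ∀ n, Set.ncard {X | X ∈ Av A ∧ X.size = n} = Set.ncard {X | X ∈ Av B ∧ X.size = n}

/-- the generating function of `Av A`, counting by number of arches -/
noncomputable def F (A : PF) : PowerSeries ℚ :=
  PowerSeries.mk fun n => (Set.ncard {X | X ∈ Av A ∧ X.size = n} : ℚ)

end PF

/-- concatenation of a list of arch systems -/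
def concatList (L : List PF) : PF := L.foldr (· ++ ·) PF.nil

/-- The equivalence relation `∼` whose classes are cohorts: the finest equivalence
relation satisfying the four closure rules. -/
inductive Sim : PF → PF → Prop
  | refl (A : PF) : Sim A A
  | symm {A B : PF} : Sim A B → Sim B A
  | trans {A B C : PF} : Sim A B → Sim B C → Sim A C
  | arch {A B : PF} : Sim A B → Sim (PF.node A PF.nil) (PF.node B PF.nil)
  | subst {a b : PF} (P Q : PF) : PF.AtomOrNil a → PF.AtomOrNil b → Sim a b →
      Sim (P ++ a ++ Q) (P ++ b ++ Q)
  | comm {a b : PF} (P Q : PF) : PF.AtomOrNil a → PF.AtomOrNil b →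
      Sim (P ++ a ++ b ++ Q) (P ++ b ++ a ++ Q)
  | rot {a b c : PF} : PF.AtomOrNil a → PF.AtomOrNil b → PF.AtomOrNil c →
      Sim (a ++ PF.node (b ++ c) PF.nil) (PF.node (a ++ b) PF.nil ++ c)

/-- the nest of `n` nested arches -/
def nest : ℕ → PF
  | 0 => PF.nil
  | n + 1 => PF.node (nest n) PF.nil

/-- the `n`-th Motzkin number -/
def motzkin (n : ℕ) : ℕ := ∑ k ∈ Finset.range (n + 1), n.choose (2 * k) * catalan k

/-- the truncated continued fractions `C_n` of the Catalan generating function -/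
noncomputable def Cfun : ℕ → PowerSeries ℚ
  | 0 => 1
  | n + 1 => (1 - PowerSeries.X * Cfun n)⁻¹

/-- a balanced parenthesis word (Dyck word): `true` = opening, `false` = closing -/
def BalancedW (w : List Bool) : Prop :=
  w.count true = w.count false ∧ ∀ p : List Bool, p <+: w → p.count false ≤ p.count true

/-- the height of a Dyck path -/
def wheight (w : List Bool) : ℕ :=
  (w.inits.map fun p => p.count true - p.count false).foldr max 0

/-- One-step deletion of a matched pair of parentheses (an arch) in a word. -/
inductive WDel : List Bool → List Bool → Prop
  | mk (x y z : List Bool) : BalancedW y →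
      WDel (x ++ [true] ++ y ++ [false] ++ z) (x ++ y ++ z)

/-- `l` avoids the pattern 231 -/
def Avoids231 (l : List ℕ) : Prop := ¬ ∃ a b c : ℕ, [b, c, a].Sublist l ∧ a < b ∧ b < c

/-- `p` and `s` are order-isomorphic sequences -/
def OrdIso (p s : List ℕ) : Prop :=
  p.length = s.length ∧ ∀ i j : ℕ, i < p.length → j < p.length →
    (p.getD i 0 < p.getD j 0 ↔ s.getD i 0 < s.getD j 0)

/-!
Write `a = [α]` and `b = [β]`. An arch system avoids `[α]` iff it is empty or an arch over an
`α`-avoider followed by an `[α]`-avoider, so the generating functions satisfy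
`F [α] = 1 + x · F α · F [α]`; hence `Av α` and `Av β` are Wilf-equivalent too, and there is
a size-preserving bijection `e` of arch systems with `e X ⊇ β ↔ X ⊇ α`.

Call an arch of `X` eligible if the part of `X` strictly to its left contains `P` and the part
strictly to its right contains `Q`. Then `X ⊇ P[α]Q` iff some eligible arch has contents
containing `α`. Applying `e` to the contents of the outermost eligible arches preserves size and
turns occurrences of `P[α]Q` into occurrences of `P[β]Q`. It does not change which arches are
eligible: a context changes only if it meets a modified arch, which is eligible itself, and then
the context contains `P` (resp. `Q`) both before and after. Hence `e⁻¹`, applied the same way,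
inverts the map.
-/

theorem Equiv.exists_of_card_fiber_eq {α β γ : Type*} {f : α → γ} {g : β → γ}
    (hf : ∀ c, Finite {a // f a = c}) (hg : ∀ c, Finite {b // g b = c})
    (h : ∀ c, Nat.card {a // f a = c} = Nat.card {b // g b = c}) :
    ∃ e : α ≃ β, ∀ a, g (e a) = f a :=
  ⟨Equiv.ofFiberEquiv fun c => (@Finite.card_eq _ _ (hf c) (hg c)).1 (h c) |>.some,
    Equiv.ofFiberEquiv_map _⟩

namespace PF

@[simp] theorem nil_append (X : PF) : nil ++ X = X := rfl

@[simp] theorem node_append (c t X : PF) : node c t ++ X = node c (t ++ X) := rfl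

@[simp] theorem append_nil (X : PF) : X ++ nil = X := by
  induction X with
  | nil => rfl
  | node c t _ ih => rw [node_append, ih]

theorem append_assoc (X Y Z : PF) : X ++ Y ++ Z = X ++ (Y ++ Z) := by
  induction X with
  | nil => rfl
  | node c t _ ih => rw [node_append, node_append, node_append, ih]

theorem size_eq_zero {X : PF} : X.size = 0 ↔ X = nil := by
  cases X <;> simp [size]

theorem Del.append_right {X X' : PF} (h : Del X X') (Y : PF) : Del (X ++ Y) (X' ++ Y) := by
  induction h with
  | root c t => rw [node_append, append_assoc]; exact Del.root c (t ++ Y)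
  | inside t hd => exact Del.inside (t ++ Y) hd
  | rest c _ ih => exact Del.rest c ih

theorem Del.append_left {Y Y' : PF} (h : Del Y Y') (X : PF) : Del (X ++ Y) (X ++ Y') := by
  induction X with
  | nil => exact h
  | node c _ _ ih => exact Del.rest c ih

theorem Del.contains {X Y : PF} (h : Del X Y) : Contains X Y := .single h

theorem Contains.refl (X : PF) : Contains X X := Relation.ReflTransGen.refl

theorem Contains.trans {X Y Z : PF} (h₁ : Contains X Y) (h₂ : Contains Y Z) : Contains X Z :=
  Relation.ReflTransGen.trans h₁ h₂

theorem Contains.append {X X' Y Y' : PF} (hX : Contains X X') (hY : Contains Y Y') :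
    Contains (X ++ Y) (X' ++ Y') :=
  (hX.lift (· ++ Y) fun _ _ hd => hd.append_right Y).trans
    (hY.lift (X' ++ ·) fun _ _ hd => hd.append_left X')

theorem Contains.node {c c' t t' : PF} (hc : Contains c c') (ht : Contains t t') :
    Contains (PF.node c t) (PF.node c' t') :=
  (hc.lift (PF.node · t) fun _ _ hd => Del.inside t hd).trans
    (ht.lift (PF.node c' ·) fun _ _ hd => Del.rest c' hd)

theorem contains_nil (X : PF) : Contains X nil := by
  induction X with
  | nil => exact .refl nil
  | node c t hc ht => exact (Del.root c t).contains.trans (hc.append ht)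

theorem eq_nil_of_nil_contains {X : PF} (h : Contains nil X) : X = nil := by
  rcases h.cases_head with rfl | ⟨_, hd, _⟩
  · rfl
  · cases hd

theorem contains_append_self_left (X Y : PF) : Contains (X ++ Y) X := by
  simpa using (Contains.refl X).append (contains_nil Y)

theorem contains_append_self_right (X Y : PF) : Contains (X ++ Y) Y :=
  (contains_nil X).append (.refl Y)

theorem node_contains_append (c t : PF) : Contains (node c t) (c ++ t) := (Del.root c t).contains

theorem node_contains_contents (c t : PF) : Contains (node c t) c :=
  (node_contains_append c t).trans (contains_append_self_left c t)

theorem node_contains_rest (c t : PF) : Contains (node c t) t :=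
  (node_contains_append c t).trans (contains_append_self_right c t)

theorem contains_atom_self (α : PF) : Contains (node α nil) α := by
  simpa using node_contains_append α nil

def UpClosed (p : PF → Prop) : Prop := ∀ ⦃X Y⦄, Contains X Y → p Y → p X

theorem upClosed_contains (P : PF) : UpClosed (Contains · P) := fun _ _ h hP => h.trans hP

namespace UpClosed

variable {p : PF → Prop}

theorem append_left (hp : UpClosed p) (A : PF) : UpClosed (fun W => p (A ++ W)) :=
  fun _ _ h => hp ((Contains.refl A).append h)

theorem append_right (hp : UpClosed p) (A : PF) : UpClosed (fun W => p (W ++ A)) :=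
  fun _ _ h => hp (h.append (.refl A))

theorem node_left (hp : UpClosed p) (c : PF) : UpClosed (fun W => p (node c W)) :=
  hp.append_left (node c nil)

theorem of_nil (hp : UpClosed p) (h : p nil) (X : PF) : p X := hp (contains_nil X) h

theorem node_context_eq (hp : UpClosed p) (h : p nil) (c c' : PF) :
    (fun W => p (node c W)) = fun W => p (node c' W) :=
  funext fun _ => propext (iff_of_true (hp.of_nil h _) (hp.of_nil h _))

end UpClosed

section Occurrences

variable {α β : PF} {g : PF → PF} {p q : PF → Prop}

/-- `Occurs α p q X`: some arch of `X` has contents containing `α`, while the part of the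
surrounding arch system strictly to its left satisfies `p` and the part strictly to its right
satisfies `q`. Both conditions are relative to `X`: `p W` is the condition on the left context
of `X` followed by `W`, and `q W` on `W` followed by the right context of `X`. -/
def Occurs (α : PF) : (PF → Prop) → (PF → Prop) → PF → Prop
  | _, _, nil => False
  | p, q, node c t =>
    (p nil ∧ q t ∧ Contains c α) ∨ Occurs α p (fun W => q (W ++ t)) c ∨
      Occurs α (fun W => p (node c W)) q t

theorem Occurs.mono {p' q' : PF → Prop} (hp : ∀ W, p W → p' W) (hq : ∀ W, q W → q' W) :
    ∀ {X : PF}, Occurs α p q X → Occurs α p' q' X := by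
  intro X
  induction X generalizing p p' q q' with
  | nil => exact id
  | node c t ihc iht =>
    rintro (⟨hnil, ht, hc⟩ | h | h)
    · exact .inl ⟨hp _ hnil, hq _ ht, hc⟩
    · exact .inr (.inl (ihc hp (fun W => hq (W ++ t)) h))
    · exact .inr (.inr (iht (fun W => hp (node c W)) hq h))

theorem occurs_append (A B : PF) :
    Occurs α p q (A ++ B) ↔
      Occurs α p (fun W => q (W ++ B)) A ∨ Occurs α (fun W => p (A ++ W)) q B := by
  induction A generalizing p with
  | nil => simp [Occurs]
  | node c t _ iht => simp only [node_append, Occurs, iht, append_assoc, or_assoc]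

theorem Occurs.contains_atom : ∀ {X : PF}, Occurs α p q X → Contains X (node α nil) := by
  intro X
  induction X generalizing p q with
  | nil => exact False.elim
  | node c t ihc iht =>
    rintro (⟨-, -, hc⟩ | h | h)
    · exact hc.node (contains_nil t)
    · exact (node_contains_contents c t).trans (ihc h)
    · exact (node_contains_rest c t).trans (iht h)

theorem occurs_node_of_eligible {c t : PF} (h : p nil ∧ q t) :
    Occurs α p q (node c t) ↔ Contains c α ∨ Occurs α (fun W => p (node c W)) q t := by
  refine ⟨?_, fun h' => h'.elim (fun hc => .inl ⟨h.1, h.2, hc⟩) (.inr ∘ .inr)⟩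
  rintro (⟨-, -, hc⟩ | hc | ht)
  · exact .inl hc
  · exact .inl (hc.contains_atom.trans (contains_atom_self α))
  · exact .inr ht

theorem occurs_node_of_not_eligible {c t : PF} (h : ¬ (p nil ∧ q t)) :
    Occurs α p q (node c t) ↔
      Occurs α p (fun W => q (W ++ t)) c ∨ Occurs α (fun W => p (node c W)) q t := by
  simp only [Occurs, ← and_assoc, h, false_and, false_or]

theorem Occurs.of_del (hp : UpClosed p) (hq : UpClosed q) {X Y : PF} (hXY : Del X Y)
    (hY : Occurs α p q Y) : Occurs α p q X := by
  induction hXY generalizing p q with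
  | root c t =>
    rcases (occurs_append c t).1 hY with h | h
    · exact .inr (.inl h)
    · exact .inr (.inr (h.mono (fun W => hp (node_contains_append c W)) fun _ => id))
  | inside t hd ih =>
    rcases hY with ⟨hnil, ht, hc⟩ | h | h
    · exact .inl ⟨hnil, ht, hd.contains.trans hc⟩
    · exact .inr (.inl (ih hp (hq.append_right t) h))
    · exact .inr (.inr (h.mono (fun W => hp (Del.inside W hd).contains) fun _ => id))
  | rest c hd ih =>
    rcases hY with ⟨hnil, ht, hc⟩ | h | h
    · exact .inl ⟨hnil, hq hd.contains ht, hc⟩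
    · exact .inr (.inl (h.mono (fun _ => id) fun W => hq (hd.append_left W).contains))
    · exact .inr (.inr (ih (hp.node_left c) hq h))

theorem contains_of_occurs {P Q X : PF} :
    ∀ {L R : PF}, Occurs α (fun W => Contains (L ++ W) P) (fun W => Contains (W ++ R) Q) X →
      Contains (L ++ X ++ R) (P ++ node α nil ++ Q) := by
  induction X with
  | nil => exact fun h => h.elim
  | node c t ihc iht =>
    rintro L R (⟨hL, hR, hc⟩ | h | h)
    · simpa [append_assoc] using (append_nil L ▸ hL).append (hc.node hR)
    · have := ihc (R := t ++ R) (by simpa only [append_assoc] using h)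
      rw [append_assoc] at this
      rw [append_assoc, node_append]
      exact ((Contains.refl L).append (node_contains_append c _)).trans this
    · have := iht (L := L ++ node c nil)
        (by simpa only [append_assoc, node_append, nil_append] using h)
      simpa only [append_assoc, node_append, nil_append] using this

theorem contains_iff_occurs (P Q X : PF) :
    Contains X (P ++ node α nil ++ Q) ↔ Occurs α (Contains · P) (Contains · Q) X := by
  constructor
  · intro h
    induction h using Relation.ReflTransGen.head_induction_on with
    | refl =>
      rw [append_assoc, occurs_append]
      exact .inr (.inl ⟨by simpa using Contains.refl P, .refl Q, .refl α⟩)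
    | head hd _ ih => exact ih.of_del (upClosed_contains P) (upClosed_contains Q) hd
  · intro h
    simpa using contains_of_occurs (L := nil) (R := nil) (by simpa using h)

theorem contains_node_atom_iff (c t : PF) :
    Contains (node c t) (node α nil) ↔ Contains c α ∨ Contains t (node α nil) := by
  constructor
  · intro h
    rw [← nil_append (node α nil), ← append_nil (nil ++ node α nil), contains_iff_occurs] at h
    rcases h with ⟨-, -, hc⟩ | h | h
    · exact .inl hc
    · exact .inl (h.contains_atom.trans (contains_atom_self α))
    · exact .inr h.contains_atom
  · rintro (h | h)
    · exact h.node (contains_nil t)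
    · exact (node_contains_rest c t).trans h

open Classical in
/-- Replaces by `g c` the contents `c` of each outermost eligible arch of `X`, i.e. of each arch
whose contexts satisfy `p` and `q` in the sense of `Occurs` and which lies inside no other such
arch. -/
noncomputable def subst (g : PF → PF) : (PF → Prop) → (PF → Prop) → PF → PF
  | _, _, nil => nil
  | p, q, node c t =>
    if p nil ∧ q t then node (g c) (subst g (fun W => p (node c W)) q t)
    else node (subst g p (fun W => q (W ++ t)) c) (subst g (fun W => p (node c W)) q t)

theorem subst_node_of_eligible {c t : PF} (h : p nil ∧ q t) :
    subst g p q (node c t) = node (g c) (subst g (fun W => p (node c W)) q t) := by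
  rw [subst, if_pos h]

theorem subst_node_of_not_eligible {c t : PF} (h : ¬ (p nil ∧ q t)) :
    subst g p q (node c t) =
      node (subst g p (fun W => q (W ++ t)) c) (subst g (fun W => p (node c W)) q t) := by
  rw [subst, if_neg h]

theorem size_subst (hg : ∀ c, (g c).size = c.size) (X : PF) :
    (subst g p q X).size = X.size := by
  induction X generalizing p q with
  | nil => rfl
  | node c t ihc iht =>
    by_cases h : p nil ∧ q t
    · simp only [subst_node_of_eligible h, size, hg, iht]
    · simp only [subst_node_of_not_eligible h, size, ihc, iht]

theorem subst_eq_or_left (hp : UpClosed p) (X : PF) :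
    subst g p q X = X ∨ p X ∧ p (subst g p q X) := by
  induction X generalizing p q with
  | nil => exact .inl rfl
  | node c t ihc iht =>
    by_cases h : p nil ∧ q t
    · exact .inr ⟨hp.of_nil h.1 _, hp.of_nil h.1 _⟩
    rw [subst_node_of_not_eligible h]
    rcases ihc hp (q := fun W => q (W ++ t)) with hc | ⟨hc, hc'⟩
    · rw [hc]
      rcases iht (hp.node_left c) (q := q) with ht | ht
      · exact .inl (by rw [ht])
      · exact .inr ht
    · exact .inr ⟨hp (node_contains_contents c t) hc, hp (node_contains_contents _ _) hc'⟩

theorem subst_eq_or_right (hq : UpClosed q) (X : PF) :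
    subst g p q X = X ∨ q X ∧ q (subst g p q X) := by
  induction X generalizing p q with
  | nil => exact .inl rfl
  | node c t ihc iht =>
    have hrest := iht (p := fun W => p (node c W)) hq
    by_cases h : p nil ∧ q t
    · rw [subst_node_of_eligible h]
      refine .inr ⟨hq (node_contains_rest c t) h.2, hq (node_contains_rest _ _) ?_⟩
      rcases hrest with ht | ht
      · rw [ht]; exact h.2
      · exact ht.2
    rw [subst_node_of_not_eligible h]
    rcases hrest with ht | ⟨ht, ht'⟩
    · rw [ht]
      rcases ihc (p := p) (hq.append_right t) with hc | ⟨hc, hc'⟩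
      · exact .inl (by rw [hc])
      · exact .inr ⟨hq (node_contains_append c t) hc, hq (node_contains_append _ t) hc'⟩
    · exact .inr ⟨hq (node_contains_rest c t) ht, hq (node_contains_rest _ _) ht'⟩

theorem subst_left_context (hp : UpClosed p) (X : PF) :
    (fun W => p (node (subst g p q X) W)) = fun W => p (node X W) := by
  funext W
  rcases subst_eq_or_left (g := g) (q := q) hp X with h | ⟨h, h'⟩
  · rw [h]
  · exact propext (iff_of_true (hp (node_contains_contents _ W) h')
      (hp (node_contains_contents X W) h))

theorem subst_right_context (hq : UpClosed q) (X : PF) :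
    (fun W => q (W ++ subst g p q X)) = fun W => q (W ++ X) := by
  funext W
  rcases subst_eq_or_right (g := g) (p := p) hq X with h | ⟨h, h'⟩
  · rw [h]
  · exact propext (iff_of_true (hq (contains_append_self_right W _) h')
      (hq (contains_append_self_right W X) h))

theorem eligible_subst_iff (hq : UpClosed q) (p' : PF → Prop) (t : PF) :
    p nil ∧ q (subst g p' q t) ↔ p nil ∧ q t :=
  and_congr_right' (iff_of_eq (congrFun (subst_right_context (g := g) (p := p') hq t) nil))

theorem subst_subst {g' : PF → PF} (hgg : ∀ c, g' (g c) = c) (hp : UpClosed p)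
    (hq : UpClosed q) (X : PF) : subst g' p q (subst g p q X) = X := by
  induction X generalizing p q with
  | nil => rfl
  | node c t ihc iht =>
    have hiff := eligible_subst_iff (g := g) (p := p) hq (fun W => p (node c W)) t
    by_cases h : p nil ∧ q t
    · rw [subst_node_of_eligible h, subst_node_of_eligible (hiff.2 h), hgg,
        hp.node_context_eq h.1 (g c) c, iht (hp.node_left c) hq]
    · rw [subst_node_of_not_eligible h, subst_node_of_not_eligible (mt hiff.1 h),
        subst_right_context hq, subst_left_context hp c, ihc hp (hq.append_right t),
        iht (hp.node_left c) hq]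

theorem occurs_subst (hg : ∀ c, Contains (g c) β ↔ Contains c α) (hp : UpClosed p)
    (hq : UpClosed q) (X : PF) : Occurs β p q (subst g p q X) ↔ Occurs α p q X := by
  induction X generalizing p q with
  | nil => rfl
  | node c t ihc iht =>
    have hiff := eligible_subst_iff (g := g) (p := p) hq (fun W => p (node c W)) t
    by_cases h : p nil ∧ q t
    · rw [subst_node_of_eligible h, occurs_node_of_eligible (hiff.2 h),
        occurs_node_of_eligible h, hg, hp.node_context_eq h.1 (g c) c, iht (hp.node_left c) hq]
    · rw [subst_node_of_not_eligible h, occurs_node_of_not_eligible (mt hiff.1 h),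
        occurs_node_of_not_eligible h, subst_right_context hq, subst_left_context hp c,
        ihc hp (hq.append_right t), iht (hp.node_left c) hq]

noncomputable def substEquiv (e : PF ≃ PF) (hp : UpClosed p) (hq : UpClosed q) : PF ≃ PF where
  toFun := subst e p q
  invFun := subst e.symm p q
  left_inv := subst_subst e.symm_apply_apply hp hq
  right_inv := subst_subst e.apply_symm_apply hp hq

end Occurrences

section Counting

open Finset

def layer (S : Set PF) (n : ℕ) : Set PF := {X | X ∈ S ∧ X.size = n}

theorem finite_setOf_size_le (n : ℕ) : {X : PF | X.size ≤ n}.Finite := by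
  induction n with
  | zero => exact (Set.finite_singleton nil).subset fun X hX => size_eq_zero.1 (Nat.le_zero.1 hX)
  | succ n ih =>
    refine (((ih.prod ih).image fun x => node x.1 x.2).insert nil).subset ?_
    rintro (_ | ⟨c, t⟩) h
    · exact Set.mem_insert _ _
    · simp only [size, Set.mem_ofPred_eq] at h
      exact Set.mem_insert_of_mem _ ⟨(c, t), ⟨by simp; omega, by simp; omega⟩, rfl⟩

theorem finite_layer (S : Set PF) (n : ℕ) : (layer S n).Finite :=
  (finite_setOf_size_le n).subset fun _ hX => hX.2.le

theorem ncard_setOf_size_add (S T : Set PF) (n : ℕ) :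
    {x : PF × PF | x.1 ∈ S ∧ x.2 ∈ T ∧ x.1.size + x.2.size = n}.ncard =
      ∑ ij ∈ antidiagonal n, (layer S ij.1).ncard * (layer T ij.2).ncard := by
  have hunion : {x : PF × PF | x.1 ∈ S ∧ x.2 ∈ T ∧ x.1.size + x.2.size = n} =
      ⋃ ij ∈ (antidiagonal n : Set (ℕ × ℕ)), layer S ij.1 ×ˢ layer T ij.2 := by
    ext ⟨c, t⟩
    simp only [layer, Set.mem_ofPred_eq, Set.mem_iUnion, Set.mem_prod, Finset.mem_coe,
      HasAntidiagonal.mem_antidiagonal, exists_prop, Prod.exists]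
    constructor
    · rintro ⟨hc, ht, hn⟩
      exact ⟨_, _, hn, ⟨hc, rfl⟩, ⟨ht, rfl⟩⟩
    · rintro ⟨_, _, hn, ⟨hc, rfl⟩, ⟨ht, rfl⟩⟩
      exact ⟨hc, ht, hn⟩
  have hdisj : (antidiagonal n : Set (ℕ × ℕ)).PairwiseDisjoint
      fun ij => layer S ij.1 ×ˢ layer T ij.2 := fun ij _ kl _ hne =>
    Set.disjoint_left.2 fun x hx hx' =>
      hne (Prod.ext (hx.1.2.symm.trans hx'.1.2) (hx.2.2.symm.trans hx'.2.2))
  rw [hunion, Set.Finite.ncard_biUnion (Finset.finite_toSet _)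
    (fun _ _ => (finite_layer S _).prod (finite_layer T _)) hdisj, finsum_mem_coe_finset]
  simp only [Set.ncard_prod]

theorem ncard_layer_contains_add_ncard_layer_av (A : PF) (n : ℕ) :
    (layer {X | Contains X A} n).ncard + (layer (Av A) n).ncard = {X : PF | X.size = n}.ncard := by
  rw [← Set.ncard_union_eq _ (finite_layer _ n) (finite_layer _ n)]
  · congr 1
    ext X
    simp only [layer, Av, Set.mem_union, Set.mem_ofPred_eq]
    tauto
  · exact Set.disjoint_left.2 fun X hX hX' => hX'.1 hX.1

theorem layer_av_zero {A : PF} (hA : A ≠ nil) : layer (Av A) 0 = {nil} := by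
  ext X
  simp only [layer, Av, Set.mem_ofPred_eq, size_eq_zero, Set.mem_singleton_iff,
    and_iff_right_iff_imp]
  rintro rfl h
  exact hA (eq_nil_of_nil_contains h)

theorem layer_av_atom_succ (α : PF) (n : ℕ) :
    layer (Av (node α nil)) (n + 1) = (fun x : PF × PF => node x.1 x.2) ''
      {x | x.1 ∈ Av α ∧ x.2 ∈ Av (node α nil) ∧ x.1.size + x.2.size = n} := by
  ext X
  cases X with
  | nil => simp [layer, size]
  | node c t =>
    simp only [layer, Av, Set.mem_ofPred_eq, contains_node_atom_iff, size, Set.mem_image,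
      Prod.exists, node.injEq]
    constructor
    · rintro ⟨h, hn⟩
      exact ⟨c, t, ⟨fun hc => h (.inl hc), fun ht => h (.inr ht), by omega⟩, rfl, rfl⟩
    · rintro ⟨_, _, ⟨hc, ht, hn⟩, rfl, rfl⟩
      exact ⟨fun h => h.elim hc ht, by omega⟩

theorem coeff_F (A : PF) (n : ℕ) : PowerSeries.coeff n (F A) = (layer (Av A) n).ncard :=
  PowerSeries.coeff_mk _ _

theorem wilfEq_iff_F_eq {A B : PF} : WilfEq A B ↔ F A = F B := by
  simp only [PowerSeries.ext_iff, coeff_F, Nat.cast_inj]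
  rfl

theorem F_atom (α : PF) : F (node α nil) = 1 + PowerSeries.X * (F α * F (node α nil)) := by
  ext (_ | n)
  · simp [coeff_F, layer_av_zero]
  · have hinj : Function.Injective fun x : PF × PF => node x.1 x.2 :=
      fun _ _ h => Prod.ext (node.inj h).1 (node.inj h).2
    rw [map_add, PowerSeries.coeff_succ_X_mul, PowerSeries.coeff_mul, coeff_F,
      layer_av_atom_succ, Set.ncard_image_of_injective _ hinj, ncard_setOf_size_add]
    simp [coeff_F]

theorem WilfEq.of_atom {α β : PF} (h : WilfEq (node α nil) (node β nil)) : WilfEq α β := by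
  rw [wilfEq_iff_F_eq] at h ⊢
  have hne : F (node β nil) ≠ 0 := fun h0 => by
    simpa [coeff_F, layer_av_zero] using congrArg (PowerSeries.coeff 0) h0
  have key :
      PowerSeries.X * (F α * F (node β nil)) = PowerSeries.X * (F β * F (node β nil)) := by
    have hα := F_atom α
    rw [h] at hα
    exact add_left_cancel (hα.symm.trans (F_atom β))
  exact mul_right_cancel₀ hne (mul_left_cancel₀ PowerSeries.X_ne_zero key)

end Counting

def IsWilfBijection (A B : PF) (e : PF ≃ PF) : Prop :=
  ∀ X, (e X).size = X.size ∧ (Contains (e X) B ↔ Contains X A)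

theorem IsWilfBijection.wilfEq {A B : PF} {e : PF ≃ PF} (he : IsWilfBijection A B e) :
    WilfEq A B :=
  fun _ => Set.ncard_congr' <| e.subtypeEquiv fun X => by
    simp only [Set.mem_ofPred_eq, Av, (he X).1, (he X).2]

theorem WilfEq.exists_isWilfBijection {A B : PF} (h : WilfEq A B) :
    ∃ e, IsWilfBijection A B e := by
  let κ : PF → PF → ℕ × Prop := fun A X => (X.size, Contains X A)
  have hfin : ∀ A c, Finite {X // κ A X = c} := fun A c =>
    Set.Finite.to_subtype <| (finite_setOf_size_le c.1).subset
      fun X (hX : κ A X = c) => (congrArg Prod.fst hX).le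
  have hfiber : ∀ A n (P : Prop),
      Nat.card {X // κ A X = (n, P)} = (layer {X | Contains X A ↔ P} n).ncard := by
    intro A n P
    rw [← Nat.card_coe_set_eq]
    congr 3
    ext X
    simp [κ, layer, and_comm]
  have hcard : ∀ n (P : Prop),
      (layer {X | Contains X A ↔ P} n).ncard = (layer {X | Contains X B ↔ P} n).ncard := by
    intro n P
    by_cases hP : P
    · have hA := ncard_layer_contains_add_ncard_layer_av A n
      have hB := ncard_layer_contains_add_ncard_layer_av B n
      have hAB : (layer (Av A) n).ncard = (layer (Av B) n).ncard := h n
      simp only [hP, iff_true]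
      omega
    · simp only [hP, iff_false]
      exact h n
  obtain ⟨e, he⟩ := Equiv.exists_of_card_fiber_eq (hfin A) (hfin B) fun ⟨n, P⟩ => by
    rw [hfiber, hfiber, hcard]
  exact ⟨e, fun X => by simpa [κ] using he X⟩

theorem IsWilfBijection.substEquiv {α β : PF} {e : PF ≃ PF} (he : IsWilfBijection α β e)
    (P Q : PF) :
    IsWilfBijection (P ++ node α nil ++ Q) (P ++ node β nil ++ Q)
      (substEquiv e (upClosed_contains P) (upClosed_contains Q)) := fun X =>
  ⟨size_subst (fun c => (he c).1) X, by
    rw [contains_iff_occurs, contains_iff_occurs]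
    exact occurs_subst (fun c => (he c).2) (upClosed_contains P) (upClosed_contains Q) X⟩

end PF

/-- If atoms `a` and `b` are Wilf-equivalent, then so are `PaQ` and `PbQ`. -/
theorem wilfEq_subst (a b : PF) (ha : a.IsAtom) (hb : b.IsAtom)
    (h : PF.WilfEq a b) (P Q : PF) :
    PF.WilfEq (P ++ a ++ Q) (P ++ b ++ Q) := by
  obtain ⟨α, rfl⟩ := ha
  obtain ⟨β, rfl⟩ := hb
  obtain ⟨e, he⟩ := h.of_atom.exists_isWilfBijection
  exact (he.substEquiv P Q).wilfEq
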